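/- The implicit embedded method of SSP-LDIRK3(3,3,2) is A-stable but not L-stable: with A = [[γ,0,0],[1−2γ,γ,0],[1/2−γ,0,γ]], γ = 1 − √2/2, and embedded weights b̂ = (−2/17, 2/13, 213/221), for every z ∈ ℂ with Re z ≤ 0 the matrix I − zA is invertible and the embedded stability function R̂(z) = 1 + z·b̂ᵀ(I − zA)⁻¹𝟙 satisfies |R̂(z)| ≤ 1; moreover b̂ᵀA⁻¹𝟙 ≠ 1, so R̂(z) does not tend to 0 as |z| → ∞. -/

import Mathlib

/-!
The coefficient matrix is lower triangular with constant diagonal `γ`, so `(I - zA)x = 𝟙` can be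
solved by forward substitution; using `γ² = 2γ - 1/2` this gives
`R̂(z) = (1 + (1 - 2γ) z + q z²) / (1 - γ z)²` with `q = 30 (1 - 2γ) / 221`.
For `z = x + iy` with `x ≤ 0`, `|1 - γz|⁴ - |1 + (1 - 2γ) z + q z²|²` is a polynomial in `y²`
whose three coefficients are nonnegative for the root `γ < 1/2` as soon as `0 ≤ q ≤ γ²`.

For the behaviour at infinity, `z (I - zA)⁻¹ = (z⁻¹ I - A)⁻¹ → -A⁻¹`, so any stability function
tends to `1 - bᵀA⁻¹𝟙`. Here `γ⁻¹ = 4 - 2γ` gives `A⁻¹𝟙 = (4 - 2γ, 2γ - 2, 1)` and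
`b̂ᵀA⁻¹𝟙 = (41 + 120γ)/221`, which is `1` only for `γ = 3/2`.
-/

open Matrix Filter Topology Bornology

namespace Matrix

variable {ι K : Type*} [Fintype ι] [DecidableEq ι] [Field K]

theorem inv_smul₀ (A : Matrix ι ι K) {c : K} (hc : c ≠ 0) : (c • A)⁻¹ = c⁻¹ • A⁻¹ := by
  by_cases hA : IsUnit A.det
  · exact inv_smul' A (Units.mk0 c hc) hA
  · have hcA : ¬ IsUnit (c • A).det := by
      simpa [det_smul, isUnit_iff_ne_zero, hc] using hA
    rw [nonsing_inv_apply_not_isUnit _ hA, nonsing_inv_apply_not_isUnit _ hcA, smul_zero]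

theorem inv_neg (A : Matrix ι ι K) : (-A)⁻¹ = -A⁻¹ := by
  simpa using inv_smul₀ A (neg_ne_zero.2 one_ne_zero)

end Matrix

section StabilityFunction

variable {ι K : Type*} [Fintype ι] [DecidableEq ι]

noncomputable def stabilityFunction [Field K] (A : Matrix ι ι K) (b : ι → K) (z : K) : K :=
  1 + z * (b ⬝ᵥ ((1 - z • A)⁻¹ *ᵥ 1))

theorem stabilityFunction_eq_of_mulVec_eq [Field K] {A : Matrix ι ι K} {z : K} {x : ι → K}
    (b : ι → K) (hA : IsUnit (1 - z • A)) (hx : (1 - z • A) *ᵥ x = 1) :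
    stabilityFunction A b z = 1 + z * (b ⬝ᵥ x) := by
  have := hA.invertible
  rw [stabilityFunction, inv_mulVec_eq_vec hx.symm]

theorem stabilityFunction_eq_inv_sub [Field K] (A : Matrix ι ι K) (b : ι → K) {z : K}
    (hz : z ≠ 0) : stabilityFunction A b z = 1 + b ⬝ᵥ ((z⁻¹ • 1 - A)⁻¹ *ᵥ 1) := by
  have h : 1 - z • A = z • (z⁻¹ • 1 - A) := by
    rw [smul_sub, smul_smul, mul_inv_cancel₀ hz, one_smul]
  rw [stabilityFunction, h, inv_smul₀ _ hz, smul_mulVec, dotProduct_smul, smul_eq_mul,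
    mul_inv_cancel_left₀ hz]

theorem tendsto_stabilityFunction_cobounded [NontriviallyNormedField K] {A : Matrix ι ι K}
    (hA : IsUnit A) (b : ι → K) :
    Tendsto (stabilityFunction A b) (cobounded K) (𝓝 (1 - b ⬝ᵥ (A⁻¹ *ᵥ 1))) := by
  have hinv : ContinuousAt Inv.inv ((0 : K) • 1 - A) := by
    refine continuousAt_matrix_inv _ ?_
    rw [Ring.inverse_eq_inv']
    refine continuousAt_inv₀ ?_
    simp [det_neg, ((isUnit_iff_isUnit_det A).1 hA).ne_zero]
  have hcont : ContinuousAt (fun u : K => 1 + b ⬝ᵥ ((u • 1 - A)⁻¹ *ᵥ 1)) 0 :=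
    (continuous_const.add (continuous_const.dotProduct
      (continuous_id.matrix_mulVec continuous_const))).continuousAt.comp
      (hinv.comp (f := fun u : K => u • (1 : Matrix ι ι K) - A) (by fun_prop))
  have hlim := hcont.tendsto.comp tendsto_inv₀_cobounded
  simp only [zero_smul, zero_sub, Matrix.inv_neg, neg_mulVec, dotProduct_neg,
    ← sub_eq_add_neg] at hlim
  refine hlim.congr' ?_
  filter_upwards [eventually_ne_cobounded 0] with z hz
  exact (stabilityFunction_eq_inv_sub A b hz).symm

theorem not_tendsto_stabilityFunction_zero [NontriviallyNormedField K] {A : Matrix ι ι K}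
    (hA : IsUnit A) {b : ι → K} (hb : b ⬝ᵥ (A⁻¹ *ᵥ 1) ≠ 1) :
    ¬ Tendsto (stabilityFunction A b) (cobounded K) (𝓝 0) := fun h =>
  sub_ne_zero.2 hb.symm (tendsto_nhds_unique (tendsto_stabilityFunction_cobounded hA b) h)

end StabilityFunction

theorem sq_add_sq_le_sq_add_sq_sq {γ q x y : ℝ} (hγ : γ ^ 2 = 2 * γ - 1 / 2) (hγ₂ : γ ≤ 1 / 2)
    (hq₀ : 0 ≤ q) (hq : q ≤ γ ^ 2) (hx : x ≤ 0) :
    (1 + (1 - 2 * γ) * x + q * x ^ 2 - q * y ^ 2) ^ 2 + (y * (1 - 2 * γ + 2 * q * x)) ^ 2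
      ≤ ((1 - γ * x) ^ 2 + (γ * y) ^ 2) ^ 2 := by
  set P := (1 - γ * x) ^ 2
  set c := 1 + (1 - 2 * γ) * x + q * x ^ 2
  set M := 2 * γ ^ 2 * P + 2 * q * c - (1 - 2 * γ + 2 * q * x) ^ 2
  have hγ₀ : 0 < γ := by nlinarith [sq_nonneg γ]
  have hPc : 0 ≤ P - c := by
    have : P - c = -x + (γ ^ 2 - q) * x ^ 2 := by ring
    rw [this]; nlinarith [sq_nonneg x]
  have hPc' : 0 ≤ P + c := by
    have : P + c = 2 + (1 - 4 * γ) * x + (γ ^ 2 + q) * x ^ 2 := by ring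
    rw [this]; nlinarith [sq_nonneg x]
  have hq₂ : 0 ≤ γ ^ 4 - q ^ 2 := by nlinarith
  have hM : 0 ≤ M := by
    have hslope : 0 ≤ 4 * γ ^ 3 + 2 * q * (1 - 2 * γ) := by
      have := pow_pos hγ₀ 3
      nlinarith
    have : M = 2 * q - (4 * γ ^ 3 + 2 * q * (1 - 2 * γ)) * x + 2 * (γ ^ 4 - q ^ 2) * x ^ 2 := by
      linear_combination (-2) * hγ
    rw [this]
    nlinarith [mul_nonpos_of_nonneg_of_nonpos hslope hx, mul_nonneg hq₂ (sq_nonneg x)]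
  have key : (P + (γ * y) ^ 2) ^ 2 - ((c - q * y ^ 2) ^ 2 + (y * (1 - 2 * γ + 2 * q * x)) ^ 2)
      = (P - c) * (P + c) + y ^ 2 * M + y ^ 4 * (γ ^ 4 - q ^ 2) := by ring
  nlinarith [mul_nonneg hPc hPc', mul_nonneg (sq_nonneg y) hM,
    mul_nonneg (pow_nonneg (sq_nonneg y) 2) hq₂]

open Complex in
theorem norm_one_add_mul_add_mul_sq_le {γ q : ℝ} (hγ : γ ^ 2 = 2 * γ - 1 / 2) (hγ₂ : γ ≤ 1 / 2)
    (hq₀ : 0 ≤ q) (hq : q ≤ γ ^ 2) {z : ℂ} (hz : z.re ≤ 0) :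
    ‖1 + (1 - 2 * γ) * z + q * z ^ 2‖ ≤ ‖1 - z * γ‖ ^ 2 := by
  obtain ⟨x, y, rfl⟩ : ∃ x y : ℝ, z = x + y * I := ⟨z.re, z.im, (re_add_im z).symm⟩
  have hN : 1 + (1 - 2 * γ) * (x + y * I) + q * (x + y * I) ^ 2
      = ((1 + (1 - 2 * γ) * x + q * x ^ 2 - q * y ^ 2 : ℝ) : ℂ)
        + ((y * (1 - 2 * γ + 2 * q * x) : ℝ) : ℂ) * I := by
    push_cast
    linear_combination q * y ^ 2 * I_sq
  have hw : 1 - (x + y * I) * γ = ((1 - γ * x : ℝ) : ℂ) + ((-(γ * y) : ℝ) : ℂ) * I := by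
    push_cast
    ring
  refine (pow_le_pow_iff_left₀ (norm_nonneg _) (by positivity) two_ne_zero).1 ?_
  rw [hN, hw, Complex.sq_norm, Complex.sq_norm, normSq_add_mul_I, normSq_add_mul_I, neg_sq]
  exact sq_add_sq_le_sq_add_sq_sq hγ hγ₂ hq₀ hq (by simpa using hz)

section SSPLDIRK3

variable {K : Type*} [Field K]

def sspLdirk3A (γ : K) : Matrix (Fin 3) (Fin 3) K :=
  !![γ, 0, 0; 1 - 2 * γ, γ, 0; 1 / 2 - γ, 0, γ]

def sspLdirk3Bhat : Fin 3 → K := ![-(2 / 17), 2 / 13, 213 / 221]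

theorem sspLdirk3A_map {L : Type*} [Field L] (f : K →+* L) (γ : K) :
    (sspLdirk3A γ).map f = sspLdirk3A (f γ) := by
  ext i j
  fin_cases i <;> fin_cases j <;> simp [sspLdirk3A, map_ofNat]

theorem one_sub_smul_sspLdirk3A (γ z : K) :
    1 - z • sspLdirk3A γ = !![1 - z * γ, 0, 0; -(z * (1 - 2 * γ)), 1 - z * γ, 0;
      -(z * (1 / 2 - γ)), 0, 1 - z * γ] := by
  ext i j
  fin_cases i <;> fin_cases j <;> simp [sspLdirk3A, one_apply]

theorem isUnit_one_sub_smul_sspLdirk3A {γ z : K} (hw : 1 - z * γ ≠ 0) :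
    IsUnit (1 - z • sspLdirk3A γ) := by
  rw [isUnit_iff_isUnit_det, one_sub_smul_sspLdirk3A, det_fin_three]
  simpa using pow_ne_zero 3 hw

theorem isUnit_sspLdirk3A {γ : K} (hγ : γ ≠ 0) : IsUnit (sspLdirk3A γ) := by
  rw [isUnit_iff_isUnit_det, sspLdirk3A, det_fin_three]
  simpa using pow_ne_zero 3 hγ

theorem stabilityFunction_sspLdirk3 [CharZero K] {γ z : K} (hγ : γ ^ 2 = 2 * γ - 1 / 2)
    (hw : 1 - z * γ ≠ 0) :
    stabilityFunction (sspLdirk3A γ) sspLdirk3Bhat z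
      = (1 + (1 - 2 * γ) * z + 30 * (1 - 2 * γ) / 221 * z ^ 2) / (1 - z * γ) ^ 2 := by
  set w := 1 - z * γ with hw_def
  have hx : (1 - z • sspLdirk3A γ) *ᵥ ![1 / w, (w + z * (1 - 2 * γ)) / w ^ 2,
      (w + z * (1 / 2 - γ)) / w ^ 2] = 1 := by
    rw [one_sub_smul_sspLdirk3A]
    ext i
    fin_cases i <;>
      simp only [mulVec, vec3_dotProduct, of_apply, Fin.zero_eta, Fin.mk_one, Fin.reduceFinMk,
        cons_val, Fin.isValue, Pi.one_apply] <;>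
      field_simp <;> ring
  have hb : sspLdirk3Bhat ⬝ᵥ
      ![1 / w, (w + z * (1 - 2 * γ)) / w ^ 2, (w + z * (1 / 2 - γ)) / w ^ 2] =
      (w + (2 / 13 * (1 - 2 * γ) + 213 / 221 * (1 / 2 - γ)) * z) / w ^ 2 := by
    simp only [sspLdirk3Bhat, vec3_dotProduct, cons_val, Fin.isValue]
    field_simp
    ring
  rw [stabilityFunction_eq_of_mulVec_eq _ (isUnit_one_sub_smul_sspLdirk3A hw) hx, hb,
    eq_div_iff (pow_ne_zero 2 hw), add_mul, one_mul, mul_div_assoc',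
    div_mul_cancel₀ _ (pow_ne_zero 2 hw), hw_def]
  linear_combination z ^ 2 * hγ

theorem sspLdirk3Bhat_dotProduct_inv_mulVec_one_ne_one [CharZero K] {γ : K}
    (hγ : γ ^ 2 = 2 * γ - 1 / 2) : sspLdirk3Bhat ⬝ᵥ ((sspLdirk3A γ)⁻¹ *ᵥ 1) ≠ 1 := by
  have hγ₀ : γ ≠ 0 := by rintro rfl; norm_num at hγ
  have := (isUnit_sspLdirk3A hγ₀).invertible
  have hx : sspLdirk3A γ *ᵥ ![4 - 2 * γ, 2 * γ - 2, 1] = 1 := by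
    ext i
    fin_cases i <;>
      simp only [sspLdirk3A, mulVec, vec3_dotProduct, of_apply, Fin.zero_eta, Fin.mk_one,
        Fin.reduceFinMk, cons_val, Fin.isValue, Pi.one_apply]
    · linear_combination (-2) * hγ
    · linear_combination 6 * hγ
    · linear_combination 2 * hγ
  rw [inv_mulVec_eq_vec hx.symm]
  intro h
  have : γ = 3 / 2 := by
    simp only [sspLdirk3Bhat, vec3_dotProduct, cons_val, Fin.isValue] at h
    linear_combination 221 / 120 * h
  subst this
  norm_num at hγ

theorem one_sub_mul_ofReal_ne_zero {γ : ℝ} (hγ : 0 ≤ γ) {z : ℂ} (hz : z.re ≤ 0) :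
    1 - z * γ ≠ 0 := by
  intro h
  have hre := congrArg Complex.re h
  simp only [Complex.sub_re, Complex.one_re, Complex.re_mul_ofReal, Complex.zero_re] at hre
  nlinarith

theorem norm_stabilityFunction_sspLdirk3_le_one {γ : ℝ} (hγ : γ ^ 2 = 2 * γ - 1 / 2)
    (hγ₂ : γ ≤ 1 / 2) (hq : 30 * (1 - 2 * γ) / 221 ≤ γ ^ 2) {z : ℂ} (hz : z.re ≤ 0) :
    ‖stabilityFunction (sspLdirk3A (γ : ℂ)) sspLdirk3Bhat z‖ ≤ 1 := by
  have hw : 1 - z * γ ≠ 0 := one_sub_mul_ofReal_ne_zero (by nlinarith [sq_nonneg γ]) hz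
  have hγC : (γ : ℂ) ^ 2 = 2 * γ - 1 / 2 := by
    simpa using congrArg (fun x : ℝ => (x : ℂ)) hγ
  rw [stabilityFunction_sspLdirk3 hγC hw, norm_div, norm_pow, div_le_one (by positivity)]
  exact_mod_cast norm_one_add_mul_add_mul_sq_le hγ hγ₂ (by linarith) hq hz

end SSPLDIRK3

theorem stmt_14 :
    let g : ℝ := 1 - Real.sqrt 2 / 2
    let A : Matrix (Fin 3) (Fin 3) ℝ := !![g, 0, 0; 1 - 2*g, g, 0; 1/2 - g, 0, g]
    let bhat : Fin 3 → ℝ := ![-(2/17), 2/13, 213/221]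
    let AC : Matrix (Fin 3) (Fin 3) ℂ := A.map Complex.ofReal
    let bC : Fin 3 → ℂ := fun i => (bhat i : ℂ)
    let Rhat : ℂ → ℂ := fun z => 1 + z * (bC ⬝ᵥ ((1 - z • AC)⁻¹ *ᵥ 1))
    (∀ z : ℂ, z.re ≤ 0 → IsUnit (1 - z • AC) ∧ ‖Rhat z‖ ≤ 1) ∧
      bhat ⬝ᵥ (A⁻¹ *ᵥ 1) ≠ 1 ∧
      ¬ Filter.Tendsto Rhat (Filter.comap (fun w : ℂ => ‖w‖) Filter.atTop) (nhds 0) := by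
  intro g A bhat AC bC Rhat
  have hsqrt : Real.sqrt 2 ^ 2 = 2 := Real.sq_sqrt zero_le_two
  have hg : g ^ 2 = 2 * g - 1 / 2 := by simp only [g]; linear_combination hsqrt / 4
  have hg₀ : 0 < g := by nlinarith [sq_nonneg g]
  have hg₂ : g ≤ 1 / 2 := by simp only [g]; nlinarith [Real.sqrt_nonneg 2]
  have hq : 30 * (1 - 2 * g) / 221 ≤ g ^ 2 := by
    rw [hg]; simp only [g]; nlinarith [Real.sqrt_nonneg 2]
  have hgC : (g : ℂ) ^ 2 = 2 * g - 1 / 2 := by simpa using congrArg (fun x : ℝ => (x : ℂ)) hg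
  have hAC : AC = sspLdirk3A (g : ℂ) := sspLdirk3A_map Complex.ofRealHom g
  have hbC : bC = sspLdirk3Bhat := by ext i; fin_cases i <;> simp [bC, bhat, sspLdirk3Bhat]
  have hR : Rhat = stabilityFunction (sspLdirk3A (g : ℂ)) sspLdirk3Bhat := by
    rw [← hAC, ← hbC]; rfl
  rw [hR, hAC, comap_norm_atTop]
  refine ⟨fun z hz => ⟨isUnit_one_sub_smul_sspLdirk3A (one_sub_mul_ofReal_ne_zero hg₀.le hz),
    norm_stabilityFunction_sspLdirk3_le_one hg hg₂ hq hz⟩,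
    sspLdirk3Bhat_dotProduct_inv_mulVec_one_ne_one hg, ?_⟩
  exact not_tendsto_stabilityFunction_zero (isUnit_sspLdirk3A (Complex.ofReal_ne_zero.2 hg₀.ne'))
    (sspLdirk3Bhat_dotProduct_inv_mulVec_one_ne_one hgC)
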